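/- arXiv:2408.08183 — 3 statements merged into one kernel-verified Lean document; each statement's English description precedes it below -/
import Mathlib

section
/- There exists a metric d on ℝ compatible with the usual topology of ℝ such that every point of ℝ is chain recurrent for the translation f(x) = x + 1 with respect to d. -/
open Real Filter Topology

noncomputable def phiCR : ℝ → ℂ := fun x =>
  (Real.cos (2 * Real.arctan x) : ℂ) + (Real.sin (2 * Real.arctan x) : ℂ) * Complex.I

lemma theta_mem (x : ℝ) : 2 * Real.arctan x ∈ Set.Ioo (-π) π := by
  have h1 := Real.neg_pi_div_two_lt_arctan x
  have h2 := Real.arctan_lt_pi_div_two x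
  constructor <;> nlinarith

lemma arg_phiCR (x : ℝ) : Complex.arg (phiCR x) = 2 * Real.arctan x := by
  have h := theta_mem x
  rw [phiCR, Complex.ofReal_cos, Complex.ofReal_sin,
    Complex.arg_cos_add_sin_mul_I ⟨h.1, h.2.le⟩]

noncomputable def rCR : ℂ → ℝ := fun z => Real.tan (Complex.arg z / 2)

lemma rCR_phiCR (x : ℝ) : rCR (phiCR x) = x := by
  rw [rCR, arg_phiCR]
  rw [show 2 * Real.arctan x / 2 = Real.arctan x by ring, Real.tan_arctan]

lemma phiCR_injective : Function.Injective phiCR :=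
  Function.LeftInverse.injective rCR_phiCR

lemma theta_continuous : Continuous fun x : ℝ => 2 * Real.arctan x :=
  continuous_const.mul Real.continuous_arctan

lemma phiCR_continuous : Continuous phiCR :=
  ((Complex.continuous_ofReal.comp (Real.continuous_cos.comp theta_continuous)).add
    ((Complex.continuous_ofReal.comp (Real.continuous_sin.comp theta_continuous)).mul
      continuous_const))

lemma phiCR_mem_slitPlane (x : ℝ) : phiCR x ∈ Complex.slitPlane := by
  rw [Complex.mem_slitPlane_iff]
  have h := theta_mem x
  simp only [phiCR, Complex.add_re, Complex.add_im, Complex.ofReal_re, Complex.ofReal_im,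
    Complex.mul_re, Complex.mul_im, Complex.I_re, Complex.I_im]
  by_cases hs : Real.sin (2 * Real.arctan x) = 0
  · left
    have : 2 * Real.arctan x = 0 := by
      rwa [Real.sin_eq_zero_iff_of_lt_of_lt h.1 h.2] at hs
    simp [this]
  · right
    simpa using hs

lemma rCR_contAt (x : ℝ) : ContinuousAt rCR (phiCR x) := by
  have harg : ContinuousAt Complex.arg (phiCR x) :=
    Complex.continuousAt_arg (phiCR_mem_slitPlane x)
  have htan : ContinuousAt Real.tan (Complex.arg (phiCR x) / 2) := by
    rw [Real.continuousAt_tan, arg_phiCR,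
      show 2 * Real.arctan x / 2 = Real.arctan x by ring]
    exact (Real.cos_arctan_pos x).ne'
  have hdiv : ContinuousAt (fun t : ℝ => t / 2) (Complex.arg (phiCR x)) :=
    (continuous_id.div_const 2).continuousAt
  have hg : ContinuousAt (fun t : ℝ => Real.tan (t / 2)) (Complex.arg (phiCR x)) :=
    ContinuousAt.comp (g := Real.tan) (f := fun t : ℝ => t / 2) htan hdiv
  exact ContinuousAt.comp (g := fun t : ℝ => Real.tan (t / 2)) (f := Complex.arg) hg harg

lemma induced_top_eq :
    TopologicalSpace.induced phiCR inferInstance = (inferInstance : TopologicalSpace ℝ) := by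
  refine le_antisymm ?_ (continuous_iff_le_induced.mp phiCR_continuous)
  have hphi : ∀ x : ℝ, @ContinuousAt ℝ ℂ (TopologicalSpace.induced phiCR inferInstance) _
      phiCR x := fun x =>
    @Continuous.continuousAt ℝ ℂ (TopologicalSpace.induced phiCR inferInstance) _ phiCR x
      continuous_induced_dom
  have h : @Continuous ℝ ℝ (TopologicalSpace.induced phiCR inferInstance) _
      (fun x => rCR (phiCR x)) := by
    rw [@continuous_iff_continuousAt ℝ ℝ (TopologicalSpace.induced phiCR inferInstance) _]
    intro x
    exact @ContinuousAt.comp ℝ ℂ ℝ (TopologicalSpace.induced phiCR inferInstance) _ _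
      phiCR x rCR (rCR_contAt x) (hphi x)
  rw [funext rCR_phiCR] at h
  exact continuous_id_iff_le.mp h

lemma phiCR_tendsto_atTop : Tendsto phiCR atTop (𝓝 (-1)) := by
  have h1 : Tendsto (fun x : ℝ => 2 * Real.arctan x) atTop (𝓝 π) := by
    have h := (Real.tendsto_arctan_atTop.mono_right nhdsWithin_le_nhds).const_mul (2 : ℝ)
    have h2 : (2 : ℝ) * (π / 2) = π := by ring
    simpa [mul_comm, h2] using h
  have hc : Continuous (fun t : ℝ => (Real.cos t : ℂ) + (Real.sin t : ℂ) * Complex.I) :=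
    ((Complex.continuous_ofReal.comp Real.continuous_cos).add
      ((Complex.continuous_ofReal.comp Real.continuous_sin).mul continuous_const))
  have hval : ((Real.cos π : ℝ) : ℂ) + ((Real.sin π : ℝ) : ℂ) * Complex.I = -1 := by
    rw [Real.cos_pi, Real.sin_pi]; push_cast; ring
  rw [show phiCR = (fun t : ℝ => (Real.cos t : ℂ) + (Real.sin t : ℂ) * Complex.I) ∘
      (fun x : ℝ => 2 * Real.arctan x) from rfl, show (-1 : ℂ) = _ from hval.symm]
  exact (hc.tendsto π).comp h1

lemma phiCR_tendsto_atBot : Tendsto phiCR atBot (𝓝 (-1)) := by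
  have h1 : Tendsto (fun x : ℝ => 2 * Real.arctan x) atBot (𝓝 (-π)) := by
    have h := (Real.tendsto_arctan_atBot.mono_right nhdsWithin_le_nhds).const_mul (2 : ℝ)
    have h2 : (2 : ℝ) * -(π / 2) = -π := by ring
    simpa [mul_comm, h2] using h
  have hc : Continuous (fun t : ℝ => (Real.cos t : ℂ) + (Real.sin t : ℂ) * Complex.I) :=
    ((Complex.continuous_ofReal.comp Real.continuous_cos).add
      ((Complex.continuous_ofReal.comp Real.continuous_sin).mul continuous_const))
  have hval : ((Real.cos (-π) : ℝ) : ℂ) + ((Real.sin (-π) : ℝ) : ℂ) * Complex.I = -1 := by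
    rw [Real.cos_neg, Real.sin_neg, Real.cos_pi, Real.sin_pi]; push_cast; ring
  rw [show phiCR = (fun t : ℝ => (Real.cos t : ℂ) + (Real.sin t : ℂ) * Complex.I) ∘
      (fun x : ℝ => 2 * Real.arctan x) from rfl, show (-1 : ℂ) = _ from hval.symm]
  exact (hc.tendsto (-π)).comp h1

noncomputable def mCR : MetricSpace ℝ :=
  MetricSpace.induced phiCR phiCR_injective inferInstance

lemma mCR_dist (x y : ℝ) :
    @dist ℝ mCR.toPseudoMetricSpace.toDist x y = dist (phiCR x) (phiCR y) := rfl

/-- There is a metric on `ℝ` compatible with the usual topology for which every point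
is chain recurrent for the translation `x ↦ x + 1`. -/
theorem exists_compatible_metric_chainRecurrent_translation :
    ∃ m : MetricSpace ℝ,
      m.toPseudoMetricSpace.toUniformSpace.toTopologicalSpace
        = (inferInstance : TopologicalSpace ℝ) ∧
      ∀ p : ℝ, ∀ ε > (0 : ℝ), ∃ n : ℕ, 1 ≤ n ∧ ∃ c : ℕ → ℝ, c 0 = p ∧ c n = p ∧
        ∀ i < n, @dist ℝ m.toPseudoMetricSpace.toDist (c i + 1) (c (i + 1)) < ε := by
  refine ⟨mCR, ?_, ?_⟩
  · rw [show mCR.toPseudoMetricSpace.toUniformSpace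
        = UniformSpace.comap phiCR inferInstance from rfl]
    rw [UniformSpace.toTopologicalSpace_comap]
    exact induced_top_eq
  · intro p ε hε
    have hT := phiCR_tendsto_atTop.eventually (Metric.ball_mem_nhds (-1 : ℂ) (half_pos hε))
    have hB := phiCR_tendsto_atBot.eventually (Metric.ball_mem_nhds (-1 : ℂ) (half_pos hε))
    obtain ⟨A, hA⟩ := eventually_atTop.mp hT
    obtain ⟨B, hBb⟩ := eventually_atBot.mp hB
    obtain ⟨N, hN⟩ := exists_nat_ge (A - p - 1)
    obtain ⟨M, hM⟩ := exists_nat_ge (p - B)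
    refine ⟨N + M + 1, by omega,
      fun i => if i ≤ N then p + i else p - M + (i - (N + 1)), ?_, ?_, ?_⟩
    · simp
    · have hx : ¬ (N + M + 1 ≤ N) := by omega
      simp only [hx, if_false, show N + M + 1 - (N + 1) = M from by omega]
      push_cast
      ring
    · intro i hi
      by_cases h1 : i + 1 ≤ N
      · have h0 : i ≤ N := by omega
        simp only [h0, h1, if_true, mCR_dist]
        push_cast
        rw [show p + ↑i + 1 = p + (↑i + 1) by ring]
        simpa using hε
      · by_cases h2 : i ≤ N
        · -- the jump
          have hiN : i = N := by omega
          subst hiN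
          simp only [h2, h1, if_true, if_false, mCR_dist]
          push_cast
          rw [show p - ↑M + (↑i + 1 - (↑i + 1)) = p - ↑M by ring]
          have d1 : dist (phiCR (p + ↑i + 1)) (-1 : ℂ) < ε / 2 := by
            apply hA; linarith
          have d2 : dist (phiCR (p - ↑M)) (-1 : ℂ) < ε / 2 := by
            apply hBb; linarith
          calc dist (phiCR (p + ↑i + 1)) (phiCR (p - ↑M))
              ≤ dist (phiCR (p + ↑i + 1)) (-1 : ℂ) + dist (-1 : ℂ) (phiCR (p - ↑M)) :=
                dist_triangle _ _ _
            _ < ε / 2 + ε / 2 := by rw [dist_comm (-1 : ℂ)]; exact add_lt_add d1 d2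
            _ = ε := by ring
        · simp only [h2, h1, if_false, mCR_dist]
          push_cast
          rw [show p - ↑M + (↑i - (↑N + 1)) + 1 = p - ↑M + (↑i + 1 - (↑N + 1)) by ring]
          simpa using hε
end

section
/- Let X be a topological space, f : X → X a continuous map, and let d₁ and d₂ be two metrics on X, both compatible with the topology of X. Then a point p ∈ X is compact-perturbation chain recurrent for f with respect to d₁ if and only if it is compact-perturbation chain recurrent for f with respect to d₂. -/
/-- `p` is compact-perturbation chain recurrent for `f` with respect to the distance
function `d`: there is a compact set `W` such that for every `ε > 0` there is an
`ε`-chain from `p` to itself whose only jumps occur at points of `W`. -/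
def CompactPertChainRecurrentPt {X : Type*} [TopologicalSpace X] (d : X → X → ℝ)
    (f : X → X) (p : X) : Prop :=
  ∃ W : Set X, IsCompact W ∧ ∀ ε > (0 : ℝ), ∃ n : ℕ, 1 ≤ n ∧ ∃ c : ℕ → X,
    c 0 = p ∧ c n = p ∧ (∀ i < n, d (f (c i)) (c (i + 1)) < ε) ∧
    (∀ i < n, f (c i) ∉ W → c (i + 1) = f (c i))

private lemma key_unif {X : Type*} (m₁ m₂ : MetricSpace X)
    (h : m₂.toPseudoMetricSpace.toUniformSpace.toTopologicalSpace =
         m₁.toPseudoMetricSpace.toUniformSpace.toTopologicalSpace)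
    {W : Set X}
    (hW : @IsCompact X m₁.toPseudoMetricSpace.toUniformSpace.toTopologicalSpace W)
    {ε : ℝ} (hε : 0 < ε) :
    ∃ δ > 0, ∀ x ∈ W, ∀ y : X,
      @dist X m₁.toPseudoMetricSpace.toDist x y < δ →
      @dist X m₂.toPseudoMetricSpace.toDist x y < ε := by
  letI : MetricSpace X := m₁
  set d₂ : X → X → ℝ := @dist X m₂.toPseudoMetricSpace.toDist with hd₂
  have hopen : ∀ x : X, IsOpen {y | d₂ x y < ε / 2} := by
    intro x
    have heq : {y | d₂ x y < ε / 2} = @Metric.ball X m₂.toPseudoMetricSpace x (ε / 2) := by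
      ext y
      simp only [Set.mem_setOf_eq, @Metric.mem_ball X m₂.toPseudoMetricSpace, hd₂]
      rw [@dist_comm X m₂.toPseudoMetricSpace]
    rw [heq]
    have := @Metric.isOpen_ball X m₂.toPseudoMetricSpace x (ε / 2)
    rwa [h] at this
  have H : ∀ x : X, ∃ δ > 0, ∀ y : X, dist x y < δ → d₂ x y < ε / 2 := by
    intro x
    have hx : x ∈ {y | d₂ x y < ε / 2} := by
      simp only [Set.mem_setOf_eq, hd₂, @dist_self X m₂.toPseudoMetricSpace]
      linarith
    obtain ⟨δ, hδ0, hδ⟩ := Metric.isOpen_iff.mp (hopen x) x hx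
    exact ⟨δ, hδ0, fun y hy => hδ (by rwa [Metric.mem_ball, dist_comm])⟩
  choose δ hδ0 hδ using H
  obtain ⟨T, hTW, hTcov⟩ := hW.elim_nhds_subcover (fun x => Metric.ball x (δ x / 2))
    (fun x _ => Metric.ball_mem_nhds x (by linarith [hδ0 x]))
  rcases T.eq_empty_or_nonempty with hT | hT
  · refine ⟨1, one_pos, fun x hx => ?_⟩
    exfalso
    have := hTcov hx
    simp [hT] at this
  · refine ⟨T.inf' hT (fun x => δ x / 2), ?_, ?_⟩
    · exact (Finset.lt_inf'_iff hT).mpr fun z _ => by linarith [hδ0 z]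
    · intro x hxW y hxy
      have hxcov := hTcov hxW
      simp only [Set.mem_iUnion] at hxcov
      obtain ⟨z, hzT, hxz⟩ := hxcov
      rw [Metric.mem_ball, dist_comm] at hxz
      have hle : T.inf' hT (fun x => δ x / 2) ≤ δ z / 2 := Finset.inf'_le _ hzT
      have h1 : dist z x < δ z := by linarith [hδ0 z]
      have h2 : dist z y < δ z := by
        have := dist_triangle z x y
        linarith
      have e1 : d₂ z x < ε / 2 := hδ z x h1
      have e2 : d₂ z y < ε / 2 := hδ z y h2
      have tri : d₂ x y ≤ d₂ x z + d₂ z y :=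
        @dist_triangle X m₂.toPseudoMetricSpace x z y
      have comm : d₂ x z = d₂ z x := @dist_comm X m₂.toPseudoMetricSpace x z
      linarith

private lemma cpcr_mono {X : Type*} [t : TopologicalSpace X] (f : X → X)
    (m₁ m₂ : MetricSpace X)
    (h₁ : m₁.toPseudoMetricSpace.toUniformSpace.toTopologicalSpace = t)
    (h₂ : m₂.toPseudoMetricSpace.toUniformSpace.toTopologicalSpace = t)
    (p : X)
    (H : CompactPertChainRecurrentPt (@dist X m₁.toPseudoMetricSpace.toDist) f p) :
    CompactPertChainRecurrentPt (@dist X m₂.toPseudoMetricSpace.toDist) f p := by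
  subst h₁
  obtain ⟨W, hW, hc⟩ := H
  refine ⟨W, hW, ?_⟩
  intro ε hε
  obtain ⟨δ, hδ0, hδ⟩ := key_unif m₁ m₂ h₂ hW hε
  obtain ⟨n, hn, c, hc0, hcn, hlt, hjump⟩ := hc δ hδ0
  refine ⟨n, hn, c, hc0, hcn, ?_, hjump⟩
  intro i hi
  by_cases hmem : f (c i) ∈ W
  · exact hδ _ hmem _ (hlt i hi)
  · rw [hjump i hi hmem, @dist_self X m₂.toPseudoMetricSpace]
    exact hε

/-- Compact-perturbation chain recurrence is independent of the choice of metric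
compatible with the topology. -/
theorem compactPertChainRecurrent_iff_of_compatible_metrics {X : Type*}
    [t : TopologicalSpace X] (f : X → X) (hf : Continuous f)
    (m₁ m₂ : MetricSpace X)
    (h₁ : m₁.toPseudoMetricSpace.toUniformSpace.toTopologicalSpace = t)
    (h₂ : m₂.toPseudoMetricSpace.toUniformSpace.toTopologicalSpace = t)
    (p : X) :
    CompactPertChainRecurrentPt (@dist X m₁.toPseudoMetricSpace.toDist) f p ↔
    CompactPertChainRecurrentPt (@dist X m₂.toPseudoMetricSpace.toDist) f p :=
  ⟨cpcr_mono f m₁ m₂ h₁ h₂ p, cpcr_mono f m₂ m₁ h₂ h₁ p⟩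
end

section
/- Let X be a compact topological space, f : X → X a continuous map, and let d₁ and d₂ be two metrics on X compatible with the topology of X. Then a point p ∈ X is chain recurrent for f with respect to d₁ if and only if it is chain recurrent for f with respect to d₂. -/
/-- `p` is chain recurrent for `f` with respect to the distance function `d`: for
every `ε > 0` there is an `ε`-chain from `p` to itself. -/
def ChainRecurrentPtWith {X : Type*} (d : X → X → ℝ) (f : X → X) (p : X) : Prop :=
  ∀ ε > (0 : ℝ), ∃ n : ℕ, 1 ≤ n ∧ ∃ c : ℕ → X, c 0 = p ∧ c n = p ∧
    ∀ i < n, d (f (c i)) (c (i + 1)) < ε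

lemma aux_chainRecurrent_mono {X : Type*}
    [t : TopologicalSpace X] [CompactSpace X] (f : X → X)
    (m₁ m₂ : MetricSpace X)
    (h₁ : m₁.toPseudoMetricSpace.toUniformSpace.toTopologicalSpace = t)
    (h₂ : m₂.toPseudoMetricSpace.toUniformSpace.toTopologicalSpace = t)
    (p : X)
    (h : ChainRecurrentPtWith (@dist X m₁.toPseudoMetricSpace.toDist) f p) :
    ChainRecurrentPtWith (@dist X m₂.toPseudoMetricSpace.toDist) f p := by
  have hc : @UniformContinuous X X m₁.toPseudoMetricSpace.toUniformSpace
      m₂.toPseudoMetricSpace.toUniformSpace id := by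
    apply @CompactSpace.uniformContinuous_of_continuous X X
      m₁.toPseudoMetricSpace.toUniformSpace m₂.toPseudoMetricSpace.toUniformSpace ?_ id ?_
    · rw [h₁]; infer_instance
    · rw [h₁, h₂]; exact continuous_id
  have key := (@Metric.uniformContinuous_iff X X m₁.toPseudoMetricSpace
    m₂.toPseudoMetricSpace id).mp hc
  intro ε hε
  obtain ⟨δ, hδ, hδε⟩ := key ε hε
  obtain ⟨n, hn, c, hc0, hcn, hchain⟩ := h δ hδ
  exact ⟨n, hn, c, hc0, hcn, fun i hi => hδε (hchain i hi)⟩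

/-- On a compact space, chain recurrence is independent of the choice of metric
compatible with the topology. -/
theorem chainRecurrent_iff_of_compatible_metrics_of_compact {X : Type*}
    [t : TopologicalSpace X] [CompactSpace X] (f : X → X) (hf : Continuous f)
    (m₁ m₂ : MetricSpace X)
    (h₁ : m₁.toPseudoMetricSpace.toUniformSpace.toTopologicalSpace = t)
    (h₂ : m₂.toPseudoMetricSpace.toUniformSpace.toTopologicalSpace = t)
    (p : X) :
    ChainRecurrentPtWith (@dist X m₁.toPseudoMetricSpace.toDist) f p ↔
    ChainRecurrentPtWith (@dist X m₂.toPseudoMetricSpace.toDist) f p := by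
  exact ⟨aux_chainRecurrent_mono f m₁ m₂ h₁ h₂ p,
    aux_chainRecurrent_mono f m₂ m₁ h₂ h₁ p⟩
end
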